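/- arXiv:1404.3454 — 2 statements merged into one kernel-verified Lean document; each statement's English description precedes it below -/
import Mathlib

section
/- Let G be a finite simple graph and H a connected subgraph of G with |V(H)| ≥ 3 such that for each pair of distinct non-adjacent vertices u, v ∈ V(H), deg_H(u) + deg_H(v) ≥ |V(H)|. Let K ⊆ V(H) with k = |K| ≥ 2 and suppose |V(H)| ≤ (k−1)k. Then there exists a path P in H whose two endpoints both belong to K and which contains every vertex of K, such that for every tree subgraph T* of G with K ⊆ V(T*), the number of edges of P is at most k times the number of edges of T*. -/
/-!
In a connected graph on `n` vertices where non-adjacent vertices `u ≠ v` satisfy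
`deg u + deg v ≥ n - 1`, a path `a = x₀, …, x_m = b` that misses a vertex can be extended. If
`a` or `b` has a neighbour off the path, prepend or append it. Otherwise all neighbours of `a`
and `b` lie on the path, and counting them gives an index `i` with `a ~ x_{i+1}` and `b ~ x_i`
(or `a ~ b`), which closes the path into a cycle on the same vertices; connectivity gives an edge
leaving the cycle, and opening the cycle at that edge gives a longer path. So `H` has a
Hamiltonian path. Cutting it down to the segment between its first and last vertices in `K`
gives a path through `K` with at most `|V(H)| - 1 < (k - 1) k` edges, and a tree containing `K`
has at least `k - 1` edges.
-/

namespace List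

variable {α : Type*} {p : α → Prop}

theorem exists_suffix_head_mem_of_exists_mem :
    ∀ {l : List α}, (∃ x ∈ l, p x) →
      ∃ s, s <:+ l ∧ ∃ hs : s ≠ [], p (s.head hs) ∧ ∀ x ∈ l, p x → x ∈ s
  | [], h => by simp at h
  | a :: t, h => by
    by_cases ha : p a
    · exact ⟨a :: t, suffix_refl _, cons_ne_nil a t, ha, fun x hx _ => hx⟩
    · obtain ⟨s, hst, hs, hhead, hmem⟩ := exists_suffix_head_mem_of_exists_mem (l := t)
        (by grind)
      refine ⟨s, hst.trans (suffix_cons a t), hs, hhead, fun x hx hpx => hmem x ?_ hpx⟩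
      grind

theorem exists_infix_head_getLast_mem_of_exists_mem {l : List α} (h : ∃ x ∈ l, p x) :
    ∃ s, s <:+: l ∧ ∃ hs : s ≠ [], p (s.head hs) ∧ p (s.getLast hs) ∧
      ∀ x ∈ l, p x → x ∈ s := by
  obtain ⟨s₁, hs₁l, hs₁, hhead₁, hmem₁⟩ := exists_suffix_head_mem_of_exists_mem h
  obtain ⟨s₂, hs₂s₁, hs₂, hhead₂, hmem₂⟩ := exists_suffix_head_mem_of_exists_mem
    (l := s₁.reverse) ⟨_, mem_reverse.2 (head_mem hs₁), hhead₁⟩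
  have hpre : s₂.reverse <+: s₁ := by simpa using reverse_prefix.2 hs₂s₁
  refine ⟨s₂.reverse, hpre.isInfix.trans hs₁l.isInfix, reverse_ne_nil_iff.2 hs₂,
    ?_, ?_, ?_⟩
  · rwa [hpre.head]
  · rwa [getLast_reverse]
  · exact fun x hx hpx => mem_reverse.2 (hmem₂ x (mem_reverse.2 (hmem₁ x hx hpx)) hpx)

end List

namespace Cycle

variable {α : Type*} {r : α → α → Prop}

theorem Chain.exists_isChain_cons_perm {l : List α} (hl : Chain r (l : Cycle α)) {y : α}
    (hy : y ∈ l) : ∃ t, (y :: t).Perm l ∧ (y :: t).IsChain r := by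
  obtain ⟨l₁, l₂, rfl⟩ := List.append_of_mem hy
  have hrot : ((l₁ ++ y :: l₂ : List α) : Cycle α) = (y :: (l₂ ++ l₁) : List α) :=
    coe_eq_coe.2 List.isRotated_append
  rw [hrot, chain_coe_cons] at hl
  exact ⟨l₂ ++ l₁, by simpa using List.perm_append_comm (l₁ := y :: l₂) (l₂ := l₁),
    hl.prefix ⟨[y], by simp⟩⟩

end Cycle

namespace SimpleGraph

variable {V : Type*} {G : SimpleGraph V}

theorem isChain_adj_reverse {l : List V} : l.reverse.IsChain G.Adj ↔ l.IsChain G.Adj := by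
  rw [List.isChain_reverse]
  exact ⟨fun h => h.imp fun _ _ hab => hab.symm, fun h => h.imp fun _ _ hab => hab.symm⟩

theorem cycleChain_append_reverse {u w : List V} (hu : u ≠ []) (hw : w ≠ [])
    (hcu : u.IsChain G.Adj) (hcw : w.IsChain G.Adj) (hlast : G.Adj (u.getLast hu) (w.getLast hw))
    (hhead : G.Adj (w.head hw) (u.head hu)) :
    Cycle.Chain G.Adj (u ++ w.reverse : Cycle V) := by
  rw [Cycle.chain_ne_nil _ (by simp [hu]), List.getLast_append_of_ne_nil _ (by simpa using hw),
    List.getLast_reverse, ← List.cons_append, List.isChain_append]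
  refine ⟨?_, isChain_adj_reverse.2 hcw, ?_⟩
  · rw [← List.singleton_append, List.isChain_append]
    refine ⟨.singleton _, hcu, ?_⟩
    simp [List.head?_eq_some_head hu, hhead]
  · simp [List.head?_reverse, List.getLast?_eq_some_getLast hw, List.getLast?_cons,
      List.getLast?_eq_some_getLast hu, hlast]

theorem exists_adj_getElem_succ_of_length_le_degree_add_degree [Fintype V] [DecidableRel G.Adj]
    {l : List V} (hl : l ≠ []) (hhead : ∀ x, G.Adj (l.head hl) x → x ∈ l)
    (hlast : ∀ x, G.Adj (l.getLast hl) x → x ∈ l)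
    (hdeg : l.length ≤ G.degree (l.head hl) + G.degree (l.getLast hl)) :
    ∃ i, ∃ h : i + 1 < l.length, G.Adj (l.head hl) l[i + 1] ∧ G.Adj (l.getLast hl) l[i] := by
  classical
  set a := l.head hl
  set b := l.getLast hl
  have hlen : 0 < l.length := List.length_pos_iff.2 hl
  -- The neighbours of `a` are at the positions `i + 1`, `i ∈ S`; those of `b` at `i ∈ T`.
  set S := (Finset.range (l.length - 1)).filter fun i => G.Adj a (l.getD (i + 1) a)
  set T := (Finset.range (l.length - 1)).filter fun i => G.Adj b (l.getD i a)
  have hS : G.degree a ≤ S.card := by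
    refine le_trans (Finset.card_le_card fun x hx => ?_) (Finset.card_image_le
      (f := fun i => l.getD (i + 1) a))
    rw [mem_neighborFinset] at hx
    obtain ⟨j, hj, rfl⟩ := List.mem_iff_getElem.1 (hhead x hx)
    obtain ⟨i, rfl⟩ : ∃ i, j = i + 1 := Nat.exists_eq_succ_of_ne_zero fun h0 =>
      hx.ne (by simp [a, h0, List.head_eq_getElem])
    simp only [Finset.mem_image, Finset.mem_filter, Finset.mem_range, S]
    exact ⟨i, ⟨by omega, by rwa [List.getD_eq_getElem _ _ hj]⟩, List.getD_eq_getElem _ _ hj⟩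
  have hT : G.degree b ≤ T.card := by
    refine le_trans (Finset.card_le_card fun x hx => ?_) (Finset.card_image_le
      (f := fun i => l.getD i a))
    rw [mem_neighborFinset] at hx
    obtain ⟨j, hj, rfl⟩ := List.mem_iff_getElem.1 (hlast x hx)
    have hjn : j ≠ l.length - 1 := fun h => hx.ne (by simp [b, h, List.getLast_eq_getElem])
    simp only [Finset.mem_image, Finset.mem_filter, Finset.mem_range, T]
    exact ⟨j, ⟨by omega, by rwa [List.getD_eq_getElem _ _ hj]⟩, List.getD_eq_getElem _ _ hj⟩
  have hcard : (Finset.range (l.length - 1)).card < S.card + T.card := by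
    rw [Finset.card_range]; omega
  obtain ⟨i, hi⟩ := Finset.inter_nonempty_of_card_lt_card_add_card
    (Finset.filter_subset _ _) (Finset.filter_subset _ _) hcard
  simp only [Finset.mem_inter, Finset.mem_filter, Finset.mem_range] at hi
  have hi1 : i + 1 < l.length := by omega
  rw [List.getD_eq_getElem _ _ hi1, List.getD_eq_getElem _ _ (by omega)] at hi
  exact ⟨i, hi1, hi.1.2, hi.2.2⟩

theorem exists_perm_cycleChain_of_ore [Fintype V] [DecidableRel G.Adj]
    (hore : ∀ u v, u ≠ v → ¬ G.Adj u v → Fintype.card V ≤ G.degree u + G.degree v + 1)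
    {l : List V} (hl : l ≠ []) (hc : l.IsChain G.Adj) (hlen : l.length < Fintype.card V)
    (hhead : ∀ x, G.Adj (l.head hl) x → x ∈ l)
    (hlast : ∀ x, G.Adj (l.getLast hl) x → x ∈ l) (hab : l.head hl ≠ l.getLast hl) :
    ∃ c : List V, c.Perm l ∧ Cycle.Chain G.Adj (c : Cycle V) := by
  by_cases hba : G.Adj (l.getLast hl) (l.head hl)
  · refine ⟨l, .refl l, (Cycle.chain_ne_nil _ hl).2 (List.isChain_cons.2 ⟨?_, hc⟩)⟩
    simpa [List.head?_eq_some_head hl] using hba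
  have hdeg : l.length ≤ G.degree (l.head hl) + G.degree (l.getLast hl) := by
    have := hore _ _ hab fun h => hba h.symm
    omega
  obtain ⟨i, hi, hai, hbi⟩ := exists_adj_getElem_succ_of_length_le_degree_add_degree hl hhead
    hlast hdeg
  have htake : l.take (i + 1) ≠ [] := by simp [hl]
  have hdrop : l.drop (i + 1) ≠ [] := by simp; omega
  refine ⟨l.take (i + 1) ++ (l.drop (i + 1)).reverse,
    ((List.reverse_perm _).append_left _).trans (by rw [List.take_append_drop]),
    cycleChain_append_reverse htake hdrop (hc.take _) (hc.drop _) ?_ ?_⟩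
  · simpa [List.getLast_take, List.getElem?_eq_getElem (Nat.lt_of_succ_lt hi)] using hbi.symm
  · simpa [List.head_take] using hai.symm

theorem exists_isChain_nodup_length_succ_of_ore [Fintype V] [DecidableRel G.Adj]
    (hG : G.Connected)
    (hore : ∀ u v, u ≠ v → ¬ G.Adj u v → Fintype.card V ≤ G.degree u + G.degree v + 1)
    {l : List V} (hl : l ≠ []) (hc : l.IsChain G.Adj) (hn : l.Nodup) {w : V} (hw : w ∉ l) :
    ∃ l' : List V, l'.IsChain G.Adj ∧ l'.Nodup ∧ l'.length = l.length + 1 := by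
  by_cases hhead : ∃ x, G.Adj (l.head hl) x ∧ x ∉ l
  · obtain ⟨x, hax, hx⟩ := hhead
    refine ⟨x :: l, List.isChain_cons.2 ⟨?_, hc⟩, hn.cons hx, rfl⟩
    simpa [List.head?_eq_some_head hl] using hax.symm
  by_cases hlast : ∃ x, G.Adj (l.getLast hl) x ∧ x ∉ l
  · obtain ⟨x, hbx, hx⟩ := hlast
    refine ⟨x :: l.reverse, List.isChain_cons.2 ⟨?_, isChain_adj_reverse.2 hc⟩,
      (List.nodup_reverse.2 hn).cons (by simpa using hx), by simp⟩
    simpa [List.getLast?_eq_some_getLast hl] using hbx.symm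
  push Not at hhead hlast
  -- Otherwise close the path into a cycle and leave it along an edge towards `w`.
  obtain ⟨p⟩ := hG.preconnected (l.head hl) w
  obtain ⟨d, -, hdl, hdw⟩ := p.exists_boundary_dart {v | v ∈ l} (List.head_mem hl) hw
  have hab : l.head hl ≠ l.getLast hl := by
    intro hab
    obtain ⟨z, rfl⟩ := (hn.head_eq_getLast_iff hl).1 hab
    have hz : d.fst = z := by simpa using hdl
    exact hdw (hhead _ (hz ▸ d.adj))
  have hlen : l.length < Fintype.card V := by simpa using (hn.cons hw).length_le_card
  obtain ⟨c, hcl, hcyc⟩ := exists_perm_cycleChain_of_ore hore hl hc hlen hhead hlast hab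
  obtain ⟨t, hperm, hct⟩ := hcyc.exists_isChain_cons_perm (hcl.mem_iff.2 hdl)
  have hperm := hperm.trans hcl
  exact ⟨d.snd :: d.fst :: t, List.isChain_cons_cons.2 ⟨d.adj.symm, hct⟩,
    (hperm.nodup_iff.2 hn).cons fun h => hdw (hperm.mem_iff.1 h), by simp [← hperm.length_eq]⟩

theorem Connected.exists_isHamiltonian_of_ore [Fintype V] [DecidableEq V] [DecidableRel G.Adj]
    (hG : G.Connected)
    (hore : ∀ u v, u ≠ v → ¬ G.Adj u v → Fintype.card V ≤ G.degree u + G.degree v + 1) :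
    ∃ (a b : V) (p : G.Walk a b), p.IsHamiltonian := by
  have hpaths : ∀ m < Fintype.card V,
      ∃ l : List V, l.IsChain G.Adj ∧ l.Nodup ∧ l.length = m + 1 := by
    intro m hm
    induction m with
    | zero =>
      obtain ⟨v⟩ := hG.nonempty
      exact ⟨[v], .singleton v, List.nodup_singleton v, rfl⟩
    | succ m ih =>
      obtain ⟨l, hc, hn, hlen⟩ := ih (by omega)
      obtain ⟨w, hw⟩ := Cardinal.exists_notMem_of_length_lt l
        (by rw [Cardinal.mk_fintype]; exact_mod_cast (by omega : l.length < Fintype.card V))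
      rw [← hlen]
      exact exists_isChain_nodup_length_succ_of_ore hG hore (by grind) hc hn hw
  have := hG.nonempty
  obtain ⟨l, hc, hn, hlen⟩ := hpaths (Fintype.card V - 1) (Nat.sub_lt Fintype.card_pos one_pos)
  have hl : l ≠ [] := by grind
  refine ⟨_, _, Walk.ofSupport l hl hc,
    Walk.isHamiltonian_iff_isPath_and_length_eq.2 ⟨?_, ?_⟩⟩
  · rwa [Walk.isPath_def, Walk.support_ofSupport]
  · simp [hlen]

theorem Walk.IsPath.exists_isPath_endpoints_mem {u v : V} {p : G.Walk u v} (hp : p.IsPath)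
    {S : Set V} (hS : ∃ x ∈ p.support, x ∈ S) :
    ∃ (a b : V) (q : G.Walk a b), q.IsPath ∧ a ∈ S ∧ b ∈ S ∧
      (∀ x ∈ p.support, x ∈ S → x ∈ q.support) ∧ q.length ≤ p.length := by
  obtain ⟨s, hsp, hs, ha, hb, hmem⟩ := List.exists_infix_head_getLast_mem_of_exists_mem hS
  refine ⟨_, _, Walk.ofSupport s hs (p.isChain_adj_support.infix hsp), ?_, ha, hb, ?_, ?_⟩
  · rw [Walk.isPath_def, Walk.support_ofSupport]
    exact hp.support_nodup.sublist hsp.sublist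
  · simpa using hmem
  · have := hsp.length_le
    rw [Walk.length_support] at this
    rw [Walk.length_ofSupport]
    omega

theorem Subgraph.ncard_edgeSet_add_one_of_isTree [Finite V] {T : G.Subgraph}
    (hT : T.coe.IsTree) : T.edgeSet.ncard + 1 = T.verts.ncard := by
  rw [← T.image_coe_edgeSet_coe, Set.ncard_image_of_injective _
    (Sym2.map.injective Subtype.val_injective), ← Nat.card_coe_set_eq, ← Nat.card_coe_set_eq]
  exact (isTree_iff_connected_and_card.1 hT).2

theorem Subgraph.coe_degree_eq_ncard_neighborSet (H : G.Subgraph) (v : H.verts)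
    [Fintype (H.coe.neighborSet v)] : H.coe.degree v = (H.neighborSet v).ncard := by
  rw [← card_neighborSet_eq_degree, ← Nat.card_eq_fintype_card,
    Nat.card_congr (Subgraph.coeNeighborSetEquiv v), Nat.card_coe_set_eq]

end SimpleGraph

theorem stmt_1_general {V : Type*} [Fintype V] [DecidableEq V]
    (G : SimpleGraph V) (H : G.Subgraph)
    (hHconn : H.Connected)
    (hOre : ∀ u v : V, u ∈ H.verts → v ∈ H.verts → u ≠ v → ¬ H.Adj u v →
      H.verts.ncard ≤ (H.neighborSet u).ncard + (H.neighborSet v).ncard)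
    (K : Set V) (hKH : K ⊆ H.verts) (hk2 : 2 ≤ K.ncard)
    (hsize : H.verts.ncard ≤ (K.ncard - 1) * K.ncard) :
    ∃ (a b : H.verts) (p : H.coe.Walk a b), p.IsPath ∧
      (a : V) ∈ K ∧ (b : V) ∈ K ∧
      (∀ x ∈ K, ∃ y ∈ p.support, (y : V) = x) ∧
      (∀ T : G.Subgraph, T.coe.IsTree → K ⊆ T.verts →
        p.length ≤ K.ncard * T.edgeSet.ncard) := by
  classical
  have hcard : Fintype.card H.verts = H.verts.ncard :=
    Nat.card_eq_fintype_card.symm.trans (Nat.card_coe_set_eq _)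
  obtain ⟨u, v, p, hp⟩ := hHconn.coe.exists_isHamiltonian_of_ore fun x y hxy hxy' => by
    rw [H.coe_degree_eq_ncard_neighborSet, H.coe_degree_eq_ncard_neighborSet, hcard]
    have := hOre x y x.2 y.2 (Subtype.coe_ne_coe.2 hxy) hxy'
    omega
  obtain ⟨x₀, hx₀⟩ := Set.nonempty_of_ncard_ne_zero (by omega : K.ncard ≠ 0)
  obtain ⟨a, b, q, hq, ha, hb, hcover, hlen⟩ := hp.isPath.exists_isPath_endpoints_mem
    (S := {x | (x : V) ∈ K}) ⟨⟨x₀, hKH hx₀⟩, hp.mem_support _, hx₀⟩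
  refine ⟨a, b, q, hq, ha, hb,
    fun x hx => ⟨⟨x, hKH hx⟩, hcover _ (hp.mem_support _) hx, rfl⟩, fun T hT hKT => ?_⟩
  have hTedges := SimpleGraph.Subgraph.ncard_edgeSet_add_one_of_isTree hT
  have hKT := Set.ncard_le_ncard hKT
  have hp_len := hp.length_eq
  calc q.length ≤ (K.ncard - 1) * K.ncard := by omega
    _ ≤ T.edgeSet.ncard * K.ncard := Nat.mul_le_mul_right _ (by omega)
    _ = K.ncard * T.edgeSet.ncard := mul_comm _ _

/-- Let `G` be a finite simple graph and `H` a connected subgraph of `G` with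
`|V(H)| ≥ 3` satisfying the Ore condition (each pair of distinct non-adjacent vertices of
`H` has degree sum in `H` at least `|V(H)|`). Let `K ⊆ V(H)` with `k = |K| ≥ 2` and
`|V(H)| ≤ (k−1)k`. Then there is a path `P` in `H` whose two endpoints belong to `K`,
containing every vertex of `K`, such that for every tree subgraph `T*` of `G` spanning `K`,
the number of edges of `P` is at most `k` times the number of edges of `T*`. -/
theorem stmt_1 {V : Type*} [Fintype V] [DecidableEq V]
    (G : SimpleGraph V) (H : G.Subgraph)
    (hHconn : H.Connected) (hH3 : 3 ≤ H.verts.ncard)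
    (hOre : ∀ u v : V, u ∈ H.verts → v ∈ H.verts → u ≠ v → ¬ H.Adj u v →
      H.verts.ncard ≤ (H.neighborSet u).ncard + (H.neighborSet v).ncard)
    (K : Set V) (hKH : K ⊆ H.verts) (hk2 : 2 ≤ K.ncard)
    (hsize : H.verts.ncard ≤ (K.ncard - 1) * K.ncard) :
    ∃ (a b : H.verts) (p : H.coe.Walk a b), p.IsPath ∧
      (a : V) ∈ K ∧ (b : V) ∈ K ∧
      (∀ x ∈ K, ∃ y ∈ p.support, (y : V) = x) ∧
      (∀ T : G.Subgraph, T.coe.IsTree → K ⊆ T.verts →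
        p.length ≤ K.ncard * T.edgeSet.ncard) :=
  stmt_1_general G H hHconn hOre K hKH hk2 hsize
end

section
/- Let G_H be a finite simple graph on n vertices with a distinguished vertex v, let m ≥ 2, and let G be the apex-copies graph built from m copies of G_H with apex x. Suppose G_H has no Hamiltonian path starting at v. Then every tree subgraph T of G whose vertex set contains V(G) \ {x} satisfies: for each i ∈ {1, …, m}, some vertex of the i-th copy of G_H has degree at least 3 in T; in particular, T has at least m branch nodes. -/
/-- The apex-copies graph: the disjoint union of `m` copies of `G_H` (on vertex set
`Fin m × α`) together with one additional apex vertex `none` adjacent exactly to the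
copy of `v` in each of the `m` copies. -/
def apexCopies {α : Type*} (G_H : SimpleGraph α) (v : α) (m : ℕ) :
    SimpleGraph (Option (Fin m × α)) :=
  SimpleGraph.fromRel fun x y =>
    match x, y with
    | some (i, u), some (j, u') => i = j ∧ G_H.Adj u u'
    | some (_, u), none => u = v
    | _, _ => False


/-!
Fix a copy `i` and suppose that every vertex of it has degree at most 2 in `T`. Since `m ≥ 2`
and `T` is connected, `T` must leave the copy, and the only edge of `G` leaving it joins `(i, v)`
to the apex; so `(i, v)` has at most one `T`-neighbour inside the copy. A path of `T` between two
vertices of the copy cannot leave it, as it would pass through `(i, v)` twice. Hence the edges of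
`T` inside the copy form a connected graph of maximum degree 2 in which `v` has degree at most 1,
that is, a Hamiltonian path of `G_H` starting at `v`. One branch vertex in each copy then gives
`m` distinct branch nodes.
-/

namespace SimpleGraph

variable {V : Type*} {G : SimpleGraph V}

namespace Walk

lemma IsPath.penultimate_takeUntil_ne_snd_dropUntil [DecidableEq V] {u v x : V}
    {p : G.Walk u v} (hp : p.IsPath) (hx : x ∈ p.support) (hxu : x ≠ u) (hxv : x ≠ v) :
    (p.takeUntil x hx).penultimate ≠ (p.dropUntil x hx).snd := by
  intro h
  have hq₁ : ¬(p.takeUntil x hx).Nil := by rw [nil_takeUntil]; exact hxu.symm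
  have hq₂ : ¬(p.dropUntil x hx).Nil := fun hnil => hxv hnil.eq
  refine hp.isTrail.disjoint_edges_takeUntil_dropUntil hx
    (mk_penultimate_end_mem_edges hq₁) ?_
  rw [h, Sym2.eq_swap]
  exact mk_start_snd_mem_edges hq₂

lemma IsPath.eq_end_of_adj_notMem_support [Finite V] [DecidableEq V] {u v x y : V}
    {p : G.Walk u v} (hdeg : ∀ w, (G.neighborSet w).ncard ≤ 2)
    (hu : (G.neighborSet u).ncard ≤ 1) (hp : p.IsPath) (hx : x ∈ p.support)
    (hy : y ∉ p.support) (hxy : G.Adj x y) : x = v := by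
  by_contra hxv
  have hq₂ : ¬(p.dropUntil x hx).Nil := fun hnil => hxv hnil.eq
  have hnext : G.Adj x (p.dropUntil x hx).snd := adj_snd hq₂
  have hnext_ne : (p.dropUntil x hx).snd ≠ y := fun h => hy <| h ▸
    p.support_dropUntil_subset_support hx
      ((p.dropUntil x hx).snd_mem_support_of_mem_edges (mk_start_snd_mem_edges hq₂))
  by_cases hxu : x = u
  · subst hxu
    have : 1 < (G.neighborSet x).ncard :=
      (Set.one_lt_ncard_iff).2 ⟨_, y, hnext, hxy, hnext_ne⟩
    omega
  · have hq₁ : ¬(p.takeUntil x hx).Nil := by rw [nil_takeUntil]; exact Ne.symm hxu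
    have hprev : G.Adj x (p.takeUntil x hx).penultimate := (adj_penultimate hq₁).symm
    have hprev_ne : (p.takeUntil x hx).penultimate ≠ y := fun h => hy <| h ▸
      p.support_takeUntil_subset_support hx
        ((p.takeUntil x hx).fst_mem_support_of_mem_edges (mk_penultimate_end_mem_edges hq₁))
    have : 2 < (G.neighborSet x).ncard :=
      (Set.two_lt_ncard_iff).2 ⟨_, _, y, hprev, hnext, hxy,
        hp.penultimate_takeUntil_ne_snd_dropUntil hx hxu hxv, hprev_ne, hnext_ne⟩
    have := hdeg x
    omega

end Walk

lemma Connected.exists_isHamiltonian_of_ncard_neighborSet_le_two [Fintype V] [DecidableEq V]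
    (hG : G.Connected) (hdeg : ∀ w, (G.neighborSet w).ncard ≤ 2) {u : V}
    (hu : (G.neighborSet u).ncard ≤ 1) : ∃ (v : V) (p : G.Walk u v), p.IsHamiltonian := by
  by_contra! hno
  have extend : ∀ (v : V) (p : G.Walk u v), p.IsPath →
      ∃ (w : V) (q : G.Walk u w), q.IsPath ∧ p.length < q.length := by
    intro v p hp
    obtain ⟨w, hw⟩ : ∃ w, w ∉ p.support := by
      simpa [hp.isHamiltonian_iff] using hno v p
    obtain ⟨d, -, hd₁, hd₂⟩ :=
      (hG.preconnected u w).some.exists_boundary_dart {x | x ∈ p.support} p.start_mem_support hw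
    have hv : d.fst = v := hp.eq_end_of_adj_notMem_support hdeg hu hd₁ hd₂ d.adj
    exact ⟨d.snd, p.concat (hv ▸ d.adj), hp.concat hd₂ _, by simp⟩
  have long (n : ℕ) : ∃ (v : V) (p : G.Walk u v), p.IsPath ∧ n ≤ p.length := by
    induction n with
    | zero => exact ⟨u, .nil, .nil, le_rfl⟩
    | succ n ih =>
      obtain ⟨v, p, hp, hn⟩ := ih
      obtain ⟨w, q, hq, hlt⟩ := extend v p hp
      exact ⟨w, q, hq, hn.trans_lt hlt⟩
  obtain ⟨v, p, hp, hn⟩ := long (Fintype.card V)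
  exact absurd hp.length_lt (not_lt.2 hn)

/-- A path between two vertices of `s` cannot leave `s`: it would pass through `g` both on its
way out and on its way back. -/
lemma Preconnected.induce_of_forall_adj_notMem_eq (hG : G.Preconnected) {s : Set V} {g : V}
    (hs : ∀ x y, G.Adj x y → x ∈ s → y ∉ s → x = g) : (G.induce s).Preconnected := by
  classical
  rintro ⟨u, hu⟩ ⟨w, hw⟩
  obtain ⟨p, hp⟩ := hG.exists_isPath u w
  refine ⟨p.induce s fun z hz => ?_⟩
  by_contra hzs
  obtain ⟨d₁, hd₁, hd₁s, hd₁s'⟩ := (p.takeUntil z hz).exists_boundary_dart s hu hzs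
  obtain ⟨d₂, hd₂, hd₂s, hd₂s'⟩ := (p.dropUntil z hz).reverse.exists_boundary_dart s hw hzs
  have hp' : ((p.takeUntil z hz).append (p.dropUntil z hz)).IsPath := by
    rwa [p.take_spec hz]
  have hg₁ : g ∈ (p.takeUntil z hz).support :=
    hs _ _ d₁.adj hd₁s hd₁s' ▸ Walk.dart_fst_mem_support_of_mem_darts _ hd₁
  have hg₂ : g ∈ (p.dropUntil z hz).support := by
    simpa [hs _ _ d₂.adj hd₂s hd₂s'] using Walk.dart_fst_mem_support_of_mem_darts _ hd₂
  have hgz : g ≠ z := fun h => hzs (h ▸ hs _ _ d₁.adj hd₁s hd₁s' ▸ hd₁s)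
  exact hp'.ne_of_mem_support_of_append hgz hg₁ hg₂ rfl

section apexCopies

variable {α : Type*} {G_H : SimpleGraph α} {v : α} {m : ℕ}

@[simp]
lemma apexCopies_adj_some_some {i j : Fin m} {a b : α} :
    (apexCopies G_H v m).Adj (some (i, a)) (some (j, b)) ↔ i = j ∧ G_H.Adj a b := by
  simp only [apexCopies, fromRel_adj, ne_eq, Option.some.injEq, Prod.mk.injEq, G_H.adj_comm b a,
    eq_comm (a := j), or_self]
  exact and_iff_right_of_imp fun h ⟨_, hab⟩ => h.2.ne hab

@[simp]
lemma apexCopies_adj_some_none {i : Fin m} {a : α} :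
    (apexCopies G_H v m).Adj (some (i, a)) none ↔ a = v := by
  simp [apexCopies]

lemma apexCopies_eq_none_of_adj {i : Fin m} {a : α} {y : Option (Fin m × α)}
    (h : (apexCopies G_H v m).Adj (some (i, a)) y) (hy : ∀ b, y ≠ some (i, b)) :
    a = v ∧ y = none := by
  rcases y with _ | ⟨j, b⟩
  · exact ⟨apexCopies_adj_some_none.1 h, rfl⟩
  · obtain ⟨rfl, -⟩ := apexCopies_adj_some_some.1 h
    exact absurd rfl (hy b)

def restrictToCopy (T : (apexCopies G_H v m).Subgraph) (i : Fin m) : SimpleGraph α :=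
  T.spanningCoe.comap fun a => some (i, a)

variable (T : (apexCopies G_H v m).Subgraph) (i : Fin m)

lemma restrictToCopy_le : restrictToCopy T i ≤ G_H :=
  fun _ _ h => (apexCopies_adj_some_some.1 (T.adj_sub h)).2

lemma ncard_neighborSet_restrictToCopy_le [Finite α] (a : α) :
    ((restrictToCopy T i).neighborSet a).ncard ≤ (T.neighborSet (some (i, a)) \ {none}).ncard :=
  Set.ncard_le_ncard_of_injOn (fun b => some (i, b)) (fun _ hb => ⟨hb, by simp⟩)
    (fun _ _ _ _ h => by simpa using h) (Set.toFinite _)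

variable {T}

def copyEmbedding (hverts : ∀ y, some y ∈ T.verts) : α ↪ T.verts where
  toFun a := ⟨some (i, a), hverts _⟩
  inj' _ _ h := by simpa using h

@[simp]
lemma coe_copyEmbedding (hverts : ∀ y, some y ∈ T.verts) (a : α) :
    (copyEmbedding i hverts a : Option (Fin m × α)) = some (i, a) :=
  rfl

lemma eq_copyEmbedding_of_adj (hverts : ∀ y, some y ∈ T.verts) {x y : T.verts}
    (h : T.coe.Adj x y) (hx : x ∈ Set.range (copyEmbedding i hverts))
    (hy : y ∉ Set.range (copyEmbedding i hverts)) :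
    x = copyEmbedding i hverts v ∧ y.val = none := by
  obtain ⟨a, rfl⟩ := hx
  obtain ⟨rfl, hy⟩ := apexCopies_eq_none_of_adj (T.adj_sub h)
    fun b hb => hy ⟨b, Subtype.ext hb.symm⟩
  exact ⟨rfl, hy⟩

lemma restrictToCopy_preconnected (hT : T.coe.Preconnected) (hverts : ∀ y, some y ∈ T.verts) :
    (restrictToCopy T i).Preconnected := by
  let f := copyEmbedding i hverts
  have hf : restrictToCopy T i = T.coe.comap f := rfl
  rw [hf, (Embedding.comap f T.coe).isoInduceRange.preconnected_iff]
  exact hT.induce_of_forall_adj_notMem_eq fun x y h hx hy =>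
    (eq_copyEmbedding_of_adj i hverts h hx hy).1

lemma adj_apex_of_preconnected (hT : T.coe.Preconnected) (hverts : ∀ y, some y ∈ T.verts)
    {j : Fin m} (hij : i ≠ j) : T.Adj (some (i, v)) none := by
  have hj : copyEmbedding j hverts v ∉ Set.range (copyEmbedding i hverts) := by
    rintro ⟨b, hb⟩
    have hb' : some (i, b) = some (j, v) := congrArg Subtype.val hb
    exact hij (congrArg Prod.fst (Option.some.inj hb'))
  obtain ⟨d, -, hd, hd'⟩ := (hT (copyEmbedding i hverts v) (copyEmbedding j hverts v)).some
    |>.exists_boundary_dart _ (Set.mem_range_self v) hj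
  obtain ⟨h₁, h₂⟩ := eq_copyEmbedding_of_adj i hverts d.adj hd hd'
  simpa [h₁, h₂] using d.adj

lemma exists_three_le_ncard_neighborSet_copy [Fintype α] [DecidableEq α] (hm : 2 ≤ m)
    (hham : ¬ ∃ (b : α) (p : G_H.Walk v b), p.IsHamiltonian) (hT : T.coe.Preconnected)
    (hverts : ∀ y, some y ∈ T.verts) : ∃ a, 3 ≤ (T.neighborSet (some (i, a))).ncard := by
  by_contra! hdeg
  have : Nontrivial (Fin m) := Fin.nontrivial_iff_two_le.2 hm
  obtain ⟨j, hji⟩ := exists_ne i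
  have hapex : none ∈ T.neighborSet (some (i, v)) :=
    adj_apex_of_preconnected i hT hverts hji.symm
  have hconn : (restrictToCopy T i).Connected :=
    (connected_iff _).2 ⟨restrictToCopy_preconnected i hT hverts, ⟨v⟩⟩
  have hdeg₂ (a : α) : ((restrictToCopy T i).neighborSet a).ncard ≤ 2 :=
    (ncard_neighborSet_restrictToCopy_le T i a).trans <|
      (Set.ncard_sdiff_singleton_le _ _).trans (Nat.le_of_lt_succ (hdeg a))
  have hdeg₁ : ((restrictToCopy T i).neighborSet v).ncard ≤ 1 := by
    have := ncard_neighborSet_restrictToCopy_le T i v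
    rw [Set.ncard_sdiff_singleton_of_mem hapex] at this
    have := hdeg v
    omega
  obtain ⟨b, p, hp⟩ := hconn.exists_isHamiltonian_of_ncard_neighborSet_le_two hdeg₂ hdeg₁
  exact hham ⟨b, p.mapLe (restrictToCopy_le T i), hp.map _ Function.bijective_id⟩

end apexCopies

end SimpleGraph

open SimpleGraph in
/-- Let `G_H` be a finite simple graph on `n` vertices with a distinguished vertex `v`,
let `m ≥ 2`, and let `G` be the apex-copies graph with apex `x = none`. Suppose `G_H`
has no Hamiltonian path starting at `v`. Then every tree subgraph `T` of `G` whose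
vertex set contains `V(G) \ {x}` satisfies: for each `i`, some vertex of the `i`-th copy
of `G_H` has degree at least 3 in `T`; in particular, `T` has at least `m` branch
nodes. -/
theorem stmt_11 {α : Type*} [Fintype α] [DecidableEq α]
    (G_H : SimpleGraph α) (v : α) (m : ℕ) (hm : 2 ≤ m)
    (hham : ¬ ∃ (b : α) (p : G_H.Walk v b), p.IsHamiltonian) :
    ∀ T : (apexCopies G_H v m).Subgraph, T.coe.IsTree →
      (Set.univ \ {(none : Option (Fin m × α))}) ⊆ T.verts →
      (∀ i : Fin m, ∃ u : α, 3 ≤ (T.neighborSet (some (i, u))).ncard) ∧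
      m ≤ {y : Option (Fin m × α) | 3 ≤ (T.neighborSet y).ncard}.ncard := by
  intro T hT hsub
  have hverts (y : Fin m × α) : some y ∈ T.verts := hsub ⟨trivial, by simp⟩
  have hbranch (i : Fin m) : ∃ u, 3 ≤ (T.neighborSet (some (i, u))).ncard :=
    exists_three_le_ncard_neighborSet_copy i hm hham hT.connected.preconnected hverts
  refine ⟨hbranch, ?_⟩
  choose u hu using hbranch
  calc m = (Set.univ : Set (Fin m)).ncard := by simp
    _ ≤ _ := Set.ncard_le_ncard_of_injOn (fun i => some (i, u i)) (fun i _ => hu i)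
      (fun _ _ _ _ h => by simpa using congrArg (Option.map Prod.fst) h) (Set.toFinite _)
end
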